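/- Let d, n ≥ 1 and θ₀ = 2π/(n+1). For k ∈ {0,1,…,n}^d let |φ_k⟩ = (1/√d)Σ_{i=1}^d e^{iθ₀k_i}|i⟩. Then the uniform mixture of n-fold tensor powers of these multi-phase states is an exact design on the symmetric subspace: (1/(n+1)^d) Σ_{k∈{0,…,n}^d} (|φ_k⟩⟨φ_k|)^{⊗n} = Σ_α (n!/(d^n α!)) |α⟩⟨α|, where the sum runs over all occupation vectors α ∈ ℕ^d with Σ_i α_i = n and α! = α_1!⋯α_d!. -/

import Mathlib

open Matrix MeasureTheory
open scoped Kronecker ComplexOrder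

noncomputable section

/-- The positive semidefinite square root of a matrix (junk value `0` if not PSD). -/
def matSqrt {ι : Type*} [Fintype ι] [DecidableEq ι] (A : Matrix ι ι ℂ) : Matrix ι ι ℂ :=
  open Classical in if h : A.PosSemidef then
    (h.1.eigenvectorUnitary : Matrix ι ι ℂ) *
      diagonal ((↑) ∘ (Real.sqrt ∘ h.1.eigenvalues)) *
      (star h.1.eigenvectorUnitary : Matrix ι ι ℂ) else 0

/-- The matrix absolute value `|X| = √(XᴴX)`. -/
def matAbs {ι : Type*} [Fintype ι] [DecidableEq ι] (X : Matrix ι ι ℂ) : Matrix ι ι ℂ :=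
  matSqrt (Xᴴ * X)

/-- Uhlmann fidelity `F(ρ,σ) = (Tr|√ρ√σ|)²`. -/
def fid {ι : Type*} [Fintype ι] [DecidableEq ι] (ρ σ : Matrix ι ι ℂ) : ℝ :=
  ((matAbs (matSqrt ρ * matSqrt σ)).trace).re ^ 2

/-- A density matrix: positive semidefinite with unit trace. -/
def IsDensity {ι : Type*} [Fintype ι] [DecidableEq ι] (ρ : Matrix ι ι ℂ) : Prop :=
  ρ.PosSemidef ∧ ρ.trace = 1

/-- The rank-one projector `|ψ⟩⟨ψ|`. -/
def ketbra {ι : Type*} (ψ : ι → ℂ) : Matrix ι ι ℂ := Matrix.vecMulVec ψ (star ψ)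

/-- The `l`-fold tensor power of a matrix on `ℂ^d`, acting on `(ℂ^d)^{⊗l}`. -/
def tpow {d : ℕ} (M : Matrix (Fin d) (Fin d) ℂ) (l : ℕ) :
    Matrix (Fin l → Fin d) (Fin l → Fin d) ℂ :=
  Matrix.of fun f g => ∏ i, M (f i) (g i)

/-- Loewner order: `A ⪯ B` iff `B - A` is positive semidefinite. -/
def loewnerLE {ι : Type*} [Fintype ι] (A B : Matrix ι ι ℂ) : Prop := (B - A).PosSemidef

/-- Projector onto the symmetric subspace of `(ℂ^d)^{⊗l}`:
`(1/l!) Σ_{π ∈ S_l} U_π` where `U_π` permutes the tensor factors. -/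
def symProj (d l : ℕ) : Matrix (Fin l → Fin d) (Fin l → Fin d) ℂ :=
  (l.factorial : ℂ)⁻¹ •
    ∑ π : Equiv.Perm (Fin l), Matrix.of fun f g => if f = (fun i => g (π i)) then (1 : ℂ) else 0


/-- Occupation numbers of a product basis index `f` of `(ℂ^d)^{⊗l}`. -/
def occ {d l : ℕ} (f : Fin l → Fin d) : Fin d → ℕ :=
  fun i => (Finset.univ.filter fun j => f j = i).card

/-- Normalized occupation-number basis vector `|α⟩` of the symmetric subspace:
the normalized symmetrization of the product vector with `α i` factors `|i⟩`. -/
def occKet (d l : ℕ) (α : Fin d → ℕ) : (Fin l → Fin d) → ℂ := fun f =>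
  if occ f = α then
    ((Real.sqrt ((∏ i, ((α i).factorial : ℝ)) / (l.factorial : ℝ)) : ℝ) : ℂ) else 0

/-- Multi-phase state `|φ_θ⟩ = (1/√d) Σᵢ e^{iθᵢ}|i⟩`. -/
def phaseState (d : ℕ) (θ : Fin d → ℝ) : Fin d → ℂ :=
  fun i => ((Real.sqrt d : ℝ) : ℂ)⁻¹ * Complex.exp (Complex.I * (θ i : ℂ))

/-- Discretized multi-phase state `|φ_k⟩` with phases multiples of `θ₀ = 2π/(n+1)`. -/
def phaseKet (d n : ℕ) (k : Fin d → Fin (n + 1)) : Fin d → ℂ :=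
  phaseState d (fun i => 2 * Real.pi / (n + 1) * (k i : ℕ))

/-! In the product basis, the `(f, g)` entry of `(|φ_k⟩⟨φ_k|)^{⊗n}` is
`d^{-n} ∏ᵢ ω^{kᵢ (occ f i - occ g i)}` with `ω = e^{iθ₀}` a primitive `(n+1)`-th root of unity.
Averaging over `k` factorises over `i`, and orthogonality of the characters of `ℤ/(n+1)` (the
exponents differ by at most `n`) leaves `d^{-n}` exactly when `f` and `g` have the same occupation
numbers. On the other side, `|α⟩⟨α|` has entry `α!/n!` at every pair of indices with occupation
`α` and `0` elsewhere, and the weight `n!/(d^n α!)` turns this into the same `d^{-n}`. -/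

section Occupation

variable {d l : ℕ}

lemma occ_le (f : Fin l → Fin d) (i : Fin d) : occ f i ≤ l :=
  (Finset.card_filter_le _ _).trans_eq (Finset.card_fin l)

lemma sum_occ (f : Fin l → Fin d) : ∑ i, occ f i = l := by
  simpa [occ] using
    (Finset.card_eq_sum_card_fiberwise fun j (_ : j ∈ Finset.univ) => Finset.mem_univ (f j)).symm

lemma prod_comp_eq_prod_pow_occ {M : Type*} [CommMonoid M] (f : Fin l → Fin d) (x : Fin d → M) :
    ∏ j, x (f j) = ∏ i, x i ^ occ f i := by
  rw [← Finset.prod_fiberwise_of_maps_to' fun j (_ : j ∈ Finset.univ) => Finset.mem_univ (f j)]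
  exact Finset.prod_congr rfl fun i _ => Finset.prod_const _

lemma tpow_ketbra_apply (ψ : Fin d → ℂ) (f g : Fin l → Fin d) :
    tpow (ketbra ψ) l f g = ∏ i, ψ i ^ occ f i * star (ψ i) ^ occ g i := by
  simp only [tpow, ketbra, of_apply, vecMulVec_apply, Pi.star_apply, Finset.prod_mul_distrib]
  rw [prod_comp_eq_prod_pow_occ f, prod_comp_eq_prod_pow_occ g (fun i => star (ψ i))]

def occFin (f : Fin l → Fin d) : Fin d → Fin (l + 1) :=
  fun i => ⟨occ f i, Nat.lt_succ_of_le (occ_le f i)⟩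

lemma val_comp_eq_occ_iff (f : Fin l → Fin d) (α : Fin d → Fin (l + 1)) :
    (fun i => (α i : ℕ)) = occ f ↔ α = occFin f := by
  simp only [funext_iff, occFin, Fin.ext_iff]

end Occupation

lemma IsPrimitiveRoot.sum_range_zpow_pow {K : Type*} [Field K] {ζ : K} {k : ℕ}
    (hζ : IsPrimitiveRoot ζ k) (a : ℤ) :
    ∑ m ∈ Finset.range k, (ζ ^ a) ^ m = if (k : ℤ) ∣ a then (k : K) else 0 := by
  split_ifs with hdvd
  · simp [(hζ.zpow_eq_one_iff_dvd a).mpr hdvd]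
  · rw [geom_sum_eq (mt (hζ.zpow_eq_one_iff_dvd a).mp hdvd), ← zpow_natCast, ← _root_.zpow_mul,
      mul_comm, _root_.zpow_mul, zpow_natCast, hζ.pow_eq_one, _root_.one_zpow, sub_self, zero_div]

/-- The primitive `(n + 1)`-th root of unity `e^{iθ₀}`. -/
def phaseRoot (n : ℕ) : ℂ := Complex.exp (2 * Real.pi * Complex.I / (n + 1))

lemma isPrimitiveRoot_phaseRoot (n : ℕ) : IsPrimitiveRoot (phaseRoot n) (n + 1) := by
  simpa [phaseRoot] using Complex.isPrimitiveRoot_exp (n + 1) n.succ_ne_zero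

/-- Orthogonality of the characters of `ℤ/(n+1)`: since `|a - b| ≤ n`, divisibility of `a - b`
by `n + 1` forces `a = b`. -/
lemma sum_phaseRoot_pow {n a b : ℕ} (ha : a ≤ n) (hb : b ≤ n) :
    ∑ m : Fin (n + 1), (phaseRoot n ^ ((a : ℤ) - b)) ^ (m : ℕ)
      = if a = b then (n + 1 : ℂ) else 0 := by
  rw [Fin.sum_univ_eq_sum_range, (isPrimitiveRoot_phaseRoot n).sum_range_zpow_pow]
  have hsmall : |(a : ℤ) - b| < (n + 1 : ℕ) := by rw [abs_sub_lt_iff]; omega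
  have : ((n + 1 : ℕ) : ℤ) ∣ (a : ℤ) - b ↔ a = b :=
    ⟨fun h => by have := Int.eq_zero_of_abs_lt_dvd h hsmall; omega, fun h => by simp [h]⟩
  simp only [this]
  push_cast
  rfl

lemma phaseKet_eq (d n : ℕ) (k : Fin d → Fin (n + 1)) (i : Fin d) :
    phaseKet d n k i = ((Real.sqrt d : ℝ) : ℂ)⁻¹ * phaseRoot n ^ (k i : ℕ) := by
  rw [phaseKet, phaseState, phaseRoot, ← Complex.exp_nat_mul]
  push_cast
  ring_nf

lemma star_phaseRoot (n : ℕ) : star (phaseRoot n) = (phaseRoot n)⁻¹ :=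
  (Complex.inv_eq_conj ((isPrimitiveRoot_phaseRoot n).norm'_eq_one n.succ_ne_zero)).symm

lemma phaseKet_pow_mul_star_pow (d n : ℕ) (k : Fin d → Fin (n + 1)) (i : Fin d) (a b : ℕ) :
    phaseKet d n k i ^ a * star (phaseKet d n k i) ^ b
      = ((Real.sqrt d : ℝ) : ℂ)⁻¹ ^ (a + b) * (phaseRoot n ^ ((a : ℤ) - b)) ^ (k i : ℕ) := by
  have hζ : phaseRoot n ≠ 0 := Complex.exp_ne_zero _
  rw [phaseKet_eq, star_mul', star_pow, star_phaseRoot, star_inv₀, Complex.star_def,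
    Complex.conj_ofReal, zpow_sub₀ hζ, zpow_natCast, zpow_natCast]
  field_simp
  ring

lemma tpow_ketbra_phaseKet_apply (d n : ℕ) (k : Fin d → Fin (n + 1)) (f g : Fin n → Fin d) :
    tpow (ketbra (phaseKet d n k)) n f g
      = ((d : ℂ) ^ n)⁻¹ * ∏ i, (phaseRoot n ^ ((occ f i : ℤ) - occ g i)) ^ (k i : ℕ) := by
  have hnorm : ((Real.sqrt d : ℝ) : ℂ)⁻¹ ^ (n + n) = ((d : ℂ) ^ n)⁻¹ := by
    rw [← two_mul, pow_mul, inv_pow, ← Complex.ofReal_pow, Real.sq_sqrt d.cast_nonneg, inv_pow]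
    push_cast
    rfl
  simp only [tpow_ketbra_apply, phaseKet_pow_mul_star_pow, Finset.prod_mul_distrib,
    Finset.prod_pow_eq_pow_sum, Finset.sum_add_distrib, sum_occ, hnorm]

lemma sum_tpow_ketbra_phaseKet_apply (d n : ℕ) (f g : Fin n → Fin d) :
    ∑ k : Fin d → Fin (n + 1), tpow (ketbra (phaseKet d n k)) n f g
      = if occ f = occ g then ((n : ℂ) + 1) ^ d * ((d : ℂ) ^ n)⁻¹ else 0 := by
  simp only [tpow_ketbra_phaseKet_apply, ← Finset.mul_sum]
  rw [← Fintype.prod_sum fun i (m : Fin (n + 1)) =>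
    (phaseRoot n ^ ((occ f i : ℤ) - occ g i)) ^ (m : ℕ)]
  simp only [sum_phaseRoot_pow (occ_le f _) (occ_le g _), Fintype.prod_ite_zero, Finset.prod_const,
    Finset.card_univ, Fintype.card_fin, ← funext_iff]
  split_ifs <;> ring

lemma ketbra_occKet_apply (d l : ℕ) (α : Fin d → ℕ) (f g : Fin l → Fin d) :
    ketbra (occKet d l α) f g
      = if occ f = α ∧ occ g = α then ((∏ i, ((α i).factorial : ℂ)) / l.factorial) else 0 := by
  have hnonneg : (0 : ℝ) ≤ (∏ i, ((α i).factorial : ℝ)) / l.factorial := by positivity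
  simp only [ketbra, vecMulVec_apply, Pi.star_apply, occKet]
  split_ifs
  · rw [Complex.star_def, Complex.conj_ofReal, ← Complex.ofReal_mul, Real.mul_self_sqrt hnonneg]
    push_cast
    rfl
  all_goals simp_all

lemma sum_coeff_mul_ketbra_occKet_apply (d n : ℕ) (f g : Fin n → Fin d) :
    ∑ α ∈ Finset.univ.filter (fun α : Fin d → Fin (n + 1) => ∑ i, (α i : ℕ) = n),
        (n.factorial : ℂ) / ((d : ℂ) ^ n * ∏ i, ((α i : ℕ).factorial : ℂ)) *
          ketbra (occKet d n (fun i => (α i : ℕ))) f g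
      = if occ f = occ g then ((d : ℂ) ^ n)⁻¹ else 0 := by
  by_cases h : occ f = occ g
  · have hcond (α : Fin d → Fin (n + 1)) :
        (occ f = (fun i => (α i : ℕ)) ∧ occ g = fun i => (α i : ℕ)) ↔ α = occFin f := by
      rw [← h, and_self, eq_comm, val_comp_eq_occ_iff]
    have hmem : occFin f ∈ Finset.univ.filter
        (fun α : Fin d → Fin (n + 1) => ∑ i, (α i : ℕ) = n) := by
      simp [occFin, sum_occ]
    have hfact : (∏ i, ((occ f i).factorial : ℂ)) ≠ 0 :=
      Finset.prod_ne_zero_iff.mpr fun i _ => Nat.cast_ne_zero.mpr (Nat.factorial_ne_zero _)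
    have hnfact : (n.factorial : ℂ) ≠ 0 := Nat.cast_ne_zero.mpr (Nat.factorial_ne_zero _)
    simp only [ketbra_occKet_apply, hcond, mul_ite, mul_zero, Finset.sum_ite_eq', hmem, if_true,
      if_pos h, occFin]
    calc _ = ((d : ℂ) ^ n)⁻¹ * ((n.factorial : ℂ) / (∏ i, ((occ f i).factorial : ℂ)) *
          ((∏ i, ((occ f i).factorial : ℂ)) / n.factorial)) := by ring
      _ = ((d : ℂ) ^ n)⁻¹ := by field_simp
  · rw [if_neg h]
    refine Finset.sum_eq_zero fun α _ => ?_
    rw [ketbra_occKet_apply, if_neg fun hα => h (hα.1.trans hα.2.symm), mul_zero]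

theorem multi_phase_exact_design_general
    (d n : ℕ) :
    ((n + 1 : ℂ) ^ d)⁻¹ • ∑ k : Fin d → Fin (n + 1), tpow (ketbra (phaseKet d n k)) n
      = ∑ α ∈ Finset.univ.filter (fun α : Fin d → Fin (n + 1) => ∑ i, (α i : ℕ) = n),
          ((n.factorial : ℂ) / ((d : ℂ) ^ n * ∏ i, ((α i : ℕ).factorial : ℂ))) •
            ketbra (occKet d n (fun i => (α i : ℕ))) := by
  ext f g
  have hpow : ((n : ℂ) + 1) ^ d ≠ 0 := pow_ne_zero _ (Nat.cast_add_one_ne_zero n)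
  simp only [Matrix.smul_apply, Matrix.sum_apply, smul_eq_mul, sum_tpow_ketbra_phaseKet_apply,
    sum_coeff_mul_ketbra_occKet_apply, mul_ite, mul_zero, inv_mul_cancel_left₀ hpow]

/-- the uniform mixture of n-fold tensor powers of the discretized
multi-phase states is an exact design on the symmetric subspace. -/
theorem multi_phase_exact_design
    (d n : ℕ) (hd : 1 ≤ d) (hn : 1 ≤ n) :
    ((n + 1 : ℂ) ^ d)⁻¹ • ∑ k : Fin d → Fin (n + 1), tpow (ketbra (phaseKet d n k)) n
      = ∑ α ∈ Finset.univ.filter (fun α : Fin d → Fin (n + 1) => ∑ i, (α i : ℕ) = n),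
          ((n.factorial : ℂ) / ((d : ℂ) ^ n * ∏ i, ((α i : ℕ).factorial : ℂ))) •
            ketbra (occKet d n (fun i => (α i : ℕ))) :=
  multi_phase_exact_design_general d n
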